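/- For each n ≥ 0, the sequence k ↦ T(2,n;k) is strictly increasing for 0 ≤ k ≤ ⌈n/2⌉ and strictly decreasing for ⌈n/2⌉ ≤ k ≤ n; in particular the maximum of T(2,n;k) over k occurs at k = ⌈n/2⌉. -/

import Mathlib

/-- Two grid squares (given as (row, column) pairs) are adjacent if they agree in one
coordinate and differ by one in the other. -/
def Adj (p q : ℕ × ℕ) : Prop :=
  (p.1 = q.1 ∧ (p.2 + 1 = q.2 ∨ q.2 + 1 = p.2)) ∨
  (p.2 = q.2 ∧ (p.1 + 1 = q.1 ∨ q.1 + 1 = p.1))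

instance : DecidableRel Adj := fun _ _ => by unfold Adj; infer_instance

/-- `T m n k` is the number of ways to select `k` squares from an `m × n` grid with
no two selected squares horizontally or vertically adjacent. -/
def T (m n k : ℕ) : ℕ :=
  (((Finset.range m ×ˢ Finset.range n).powersetCard k).filter
    (fun s => ∀ p ∈ s, ∀ q ∈ s, ¬ Adj p q)).card

/-!
Splitting the independent sets of the `2 × (n + 2)` board according to its last column gives
`T(n+2, k+1) = T(n+1, k+1) + T(n+1, k) + T(n, k)`, which is the Delannoy recurrence; hence
`T(q+k+1, k+1) = D(k+1, q) + D(k, q)` with `D(p, q) = ∑ⱼ 2ʲ C(p, j) C(q, j)`.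
Written as sums over `j`, `T(n, k)` and `T(n, k+1)` can be compared term by term: after Pascal's
rule the comparison reduces to `C(a, j+1) C(b, j) ≤ C(a, j) C(b, j+1)` for `a ≤ b`, and the
term `j = 1` is strict.
-/

open Finset

theorem Adj.symm {p q : ℕ × ℕ} (h : Adj p q) : Adj q p := by
  unfold Adj at *; omega

theorem Adj.irrefl (p : ℕ × ℕ) : ¬ Adj p p := by
  unfold Adj; omega

def indepSets (U : Finset (ℕ × ℕ)) (k : ℕ) : Finset (Finset (ℕ × ℕ)) :=
  (U.powersetCard k).filter (fun s => ∀ p ∈ s, ∀ q ∈ s, ¬ Adj p q)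

theorem mem_indepSets {U s : Finset (ℕ × ℕ)} {k : ℕ} :
    s ∈ indepSets U k ↔ s ⊆ U ∧ #s = k ∧ ∀ p ∈ s, ∀ q ∈ s, ¬ Adj p q := by
  simp [indepSets, and_assoc]

theorem indepSets_erase (U : Finset (ℕ × ℕ)) (c : ℕ × ℕ) (k : ℕ) :
    indepSets (U.erase c) k = {s ∈ indepSets U k | c ∉ s} := by
  ext s
  simp only [mem_filter, mem_indepSets, subset_erase]
  tauto

theorem card_filter_mem_indepSets {U : Finset (ℕ × ℕ)} {c : ℕ × ℕ} (hc : c ∈ U) (k : ℕ) :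
    #{s ∈ indepSets U (k + 1) | c ∈ s}
      = #(indepSets {p ∈ U | p ≠ c ∧ ¬ Adj c p} k) := by
  refine card_nbij' (·.erase c) (insert c ·) ?_ ?_ ?_ ?_
  · intro s hs
    rw [mem_coe, mem_filter, mem_indepSets] at hs
    rw [mem_coe, mem_indepSets]
    obtain ⟨⟨hsU, hcard, hind⟩, hcs⟩ := hs
    refine ⟨fun p hp => ?_, by rw [card_erase_of_mem hcs, hcard]; rfl,
      fun p hp q hq => hind p (mem_of_mem_erase hp) q (mem_of_mem_erase hq)⟩
    exact mem_filter.2 ⟨hsU (mem_of_mem_erase hp), ne_of_mem_erase hp,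
      hind c hcs p (mem_of_mem_erase hp)⟩
  · intro t ht
    rw [mem_coe, mem_indepSets] at ht
    rw [mem_coe, mem_filter, mem_indepSets]
    obtain ⟨htU, hcard, hind⟩ := ht
    have hct : c ∉ t := fun h => (mem_filter.1 (htU h)).2.1 rfl
    have hnb : ∀ p ∈ t, ¬ Adj c p := fun p hp => (mem_filter.1 (htU hp)).2.2
    refine ⟨⟨insert_subset hc fun p hp => (mem_filter.1 (htU hp)).1,
      by rw [card_insert_of_notMem hct, hcard], ?_⟩, mem_insert_self c t⟩
    intro p hp q hq
    rw [mem_insert] at hp hq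
    rcases hp with rfl | hp <;> rcases hq with rfl | hq
    · exact Adj.irrefl _
    · exact hnb q hq
    · exact fun h => hnb p hp h.symm
    · exact hind p hp q hq
  · intro s hs
    exact insert_erase (mem_filter.1 hs).2
  · intro t ht
    exact erase_insert fun h => (mem_filter.1 ((mem_indepSets.1 ht).1 h)).2.1 rfl

def ladder (n : ℕ) : Finset (ℕ × ℕ) := range 2 ×ˢ range n

theorem T_two_eq_card (n k : ℕ) : T 2 n k = #(indepSets (ladder n) k) := rfl

theorem le_of_mem_indepSets_ladder {s : Finset (ℕ × ℕ)} {n k : ℕ}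
    (hs : s ∈ indepSets (ladder n) k) : k ≤ n := by
  obtain ⟨hsU, rfl, hind⟩ := mem_indepSets.1 hs
  have hrow : ∀ p ∈ s, p.1 < 2 ∧ p.2 < n := fun p hp => by simpa [ladder] using hsU hp
  -- two distinct cells of the same column of a two-row grid are adjacent
  simpa using card_le_card_of_injOn Prod.snd (t := range n)
    (fun p hp => mem_range.2 (hrow p hp).2) fun p hp q hq hpq => by
      by_contra hne
      have := hrow p hp; have := hrow q hq
      exact hind p hp q hq (Or.inr ⟨hpq, by grind⟩)

theorem T_two_eq_zero_of_lt {n k : ℕ} (h : n < k) : T 2 n k = 0 :=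
  card_eq_zero.2 <| eq_empty_of_forall_notMem fun _ hs =>
    absurd (le_of_mem_indepSets_ladder hs) (not_le.2 h)

theorem ladder_succ_erase_erase (n : ℕ) :
    ((ladder (n + 1)).erase (0, n)).erase (1, n) = ladder n := by
  ext ⟨a, b⟩; simp [ladder]; omega

theorem ladder_filter_not_adj {i : ℕ} (hi : i < 2) (n : ℕ) :
    {p ∈ ladder (n + 2) | p ≠ (i, n + 1) ∧ ¬ Adj (i, n + 1) p}
      = (ladder (n + 1)).erase (i, n) := by
  ext ⟨a, b⟩; simp [ladder, Adj]; omega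

theorem T_two_succ (n k : ℕ) :
    T 2 (n + 1) k = T 2 n k + #{s ∈ indepSets (ladder (n + 1)) k | (0, n) ∈ s}
      + #{s ∈ indepSets (ladder (n + 1)) k | (1, n) ∈ s} := by
  rw [T_two_eq_card (n + 1), T_two_eq_card n, ← ladder_succ_erase_erase n, indepSets_erase,
    indepSets_erase, filter_filter]
  set S := indepSets (ladder (n + 1)) k
  have hcol : {s ∈ S | (0, n) ∉ s ∧ (1, n) ∈ s} = {s ∈ S | (1, n) ∈ s} :=
    filter_congr fun s hs => and_iff_right_of_imp fun h1 h0 =>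
      (mem_indepSets.1 hs).2.2 _ h0 _ h1 (by simp [Adj])
  have h0 := card_filter_add_card_filter_not (s := S) (fun s => (0, n) ∈ s)
  have h1 := card_filter_add_card_filter_not (s := {s ∈ S | (0, n) ∉ s}) (fun s => (1, n) ∈ s)
  rw [filter_filter, filter_filter, hcol] at h1
  omega

theorem card_filter_mem_add_card_filter_mem {i : ℕ} (hi : i < 2) (n k : ℕ) :
    #{s ∈ indepSets (ladder (n + 2)) (k + 1) | (i, n + 1) ∈ s}
      + #{s ∈ indepSets (ladder (n + 1)) k | (i, n) ∈ s} = T 2 (n + 1) k := by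
  rw [card_filter_mem_indepSets (by simp [ladder]; omega), ladder_filter_not_adj hi,
    indepSets_erase, T_two_eq_card, add_comm]
  exact card_filter_add_card_filter_not _

theorem T_two_add_two (n k : ℕ) :
    T 2 (n + 2) (k + 1) = T 2 (n + 1) (k + 1) + T 2 (n + 1) k + T 2 n k := by
  have hnext := T_two_succ (n + 1) (k + 1)
  rw [show n + 1 + 1 = n + 2 from rfl] at hnext
  have hprev := T_two_succ n k
  have hrow₀ := card_filter_mem_add_card_filter_mem (i := 0) (by norm_num) n k
  have hrow₁ := card_filter_mem_add_card_filter_mem (i := 1) (by norm_num) n k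
  -- by `hrow₀`, `hrow₁` and `hprev`, the last-column terms of `hnext` sum to
  -- `2 T(n+1, k) - (T(n+1, k) - T(n, k))`
  omega

theorem T_two_zero (n : ℕ) : T 2 n 0 = 1 := by
  rw [T_two_eq_card, card_eq_one]
  exact ⟨∅, eq_singleton_iff_unique_mem.2 ⟨by simp [mem_indepSets],
    fun s hs => card_eq_zero.1 (mem_indepSets.1 hs).2.1⟩⟩

theorem T_two_self (k : ℕ) : T 2 (k + 1) (k + 1) = 2 := by
  induction k with
  | zero => decide
  | succ k ih =>
    rw [T_two_add_two, ih, T_two_eq_zero_of_lt (by omega), T_two_eq_zero_of_lt (by omega)]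

def delannoy (p q : ℕ) : ℕ := ∑ j ∈ range (p + 1), 2 ^ j * (p.choose j * q.choose j)

theorem delannoy_eq_sum_range {p N : ℕ} (h : p < N) (q : ℕ) :
    delannoy p q = ∑ j ∈ range N, 2 ^ j * (p.choose j * q.choose j) :=
  sum_subset (range_subset_range.2 h) fun j _ hj => by
    rw [Nat.choose_eq_zero_of_lt (by simpa using hj), zero_mul, mul_zero]

theorem delannoy_zero_left (q : ℕ) : delannoy 0 q = 1 := by
  simp [delannoy]

theorem delannoy_zero_right (p : ℕ) : delannoy p 0 = 1 := by
  simp [delannoy, sum_range_succ']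

theorem delannoy_succ_succ (p q : ℕ) :
    delannoy (p + 1) (q + 1) = delannoy p (q + 1) + delannoy (p + 1) q + delannoy p q := by
  have hshift : ∀ a b, a ≤ p + 1 →
      delannoy a b
        = ∑ j ∈ range (p + 1), 2 ^ (j + 1) * (a.choose (j + 1) * b.choose (j + 1)) + 1 :=
    fun a b ha => by
      rw [delannoy_eq_sum_range (N := p + 2) (by omega), sum_range_succ']
      simp
  have hpascal :
      ∑ j ∈ range (p + 1), 2 ^ (j + 1) * ((p + 1).choose (j + 1) * (q + 1).choose (j + 1))
        + ∑ j ∈ range (p + 1), 2 ^ (j + 1) * (p.choose (j + 1) * q.choose (j + 1))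
      = ∑ j ∈ range (p + 1), 2 ^ (j + 1) * (p.choose (j + 1) * (q + 1).choose (j + 1))
        + ∑ j ∈ range (p + 1), 2 ^ (j + 1) * ((p + 1).choose (j + 1) * q.choose (j + 1))
        + 2 * delannoy p q := by
    rw [delannoy, mul_sum, ← sum_add_distrib, ← sum_add_distrib, ← sum_add_distrib]
    refine sum_congr rfl fun j _ => ?_
    simp only [Nat.choose_succ_succ']
    ring
  have hpq := hshift p q (by omega)
  rw [hshift (p + 1) (q + 1) le_rfl, hshift p (q + 1) (by omega), hshift (p + 1) q le_rfl]
  omega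

theorem T_two_succ_eq_delannoy (k q : ℕ) :
    T 2 (q + k + 1) (k + 1) = delannoy (k + 1) q + delannoy k q := by
  induction q generalizing k with
  | zero => rw [zero_add, T_two_self, delannoy_zero_right, delannoy_zero_right]
  | succ q ihq =>
    induction k with
    | zero =>
      rw [show q + 1 + 0 + 1 = q + 2 from rfl, T_two_add_two, T_two_zero, T_two_zero, ihq 0,
        delannoy_succ_succ 0 q]
      simp only [delannoy_zero_left]
      ring
    | succ k ihk =>
      rw [show q + 1 + k + 1 = q + (k + 1) + 1 by ring] at ihk
      rw [show q + 1 + (k + 1) + 1 = q + k + 1 + 2 by ring, T_two_add_two,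
        show q + k + 1 + 1 = q + (k + 1) + 1 by ring, ihq (k + 1), ihk, ihq k,
        delannoy_succ_succ (k + 1) q, delannoy_succ_succ k q]
      ring

theorem Nat.choose_succ_mul_choose_le {a b : ℕ} (h : a ≤ b) (j : ℕ) :
    a.choose (j + 1) * b.choose j ≤ a.choose j * b.choose (j + 1) := by
  refine Nat.le_of_mul_le_mul_left ?_ (Nat.succ_pos j)
  calc (j + 1) * (a.choose (j + 1) * b.choose j) = a.choose j * (a - j) * b.choose j := by
        rw [← Nat.choose_succ_right_eq]; ring
    _ ≤ a.choose j * (b - j) * b.choose j := by gcongr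
    _ = (j + 1) * (a.choose j * b.choose (j + 1)) := by
        rw [mul_assoc, mul_comm (b - j), ← Nat.choose_succ_right_eq]; ring

theorem choose_add_choose_mul_succ_choose_le {k m : ℕ} (h : k < m) (j : ℕ) :
    ((k + 1).choose j + k.choose j) * (m + 1).choose j
      ≤ ((k + 2).choose j + (k + 1).choose j) * m.choose j := by
  cases j with
  | zero => simp
  | succ j =>
    have h1 := Nat.choose_succ_mul_choose_le h j
    have h2 := Nat.choose_succ_mul_choose_le h.le j
    simp only [Nat.choose_succ_succ'] at h1 ⊢
    linarith

theorem choose_add_choose_mul_choose_le_succ {k m : ℕ} (h : m ≤ k) (j : ℕ) :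
    ((k + 2).choose j + (k + 1).choose j) * m.choose j
      ≤ ((k + 1).choose j + k.choose j) * (m + 1).choose j := by
  cases j with
  | zero => simp
  | succ j =>
    have h1 := Nat.choose_succ_mul_choose_le h j
    have h2 := Nat.choose_succ_mul_choose_le (h.trans k.le_succ) j
    simp only [Nat.choose_succ_succ'] at h2 ⊢
    linarith

theorem delannoy_add_delannoy_eq_sum {k N : ℕ} (h : k + 1 < N) (q : ℕ) :
    delannoy (k + 1) q + delannoy k q
      = ∑ j ∈ range N, 2 ^ j * (((k + 1).choose j + k.choose j) * q.choose j) := by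
  rw [delannoy_eq_sum_range h, delannoy_eq_sum_range (by omega : k < N), ← sum_add_distrib]
  exact sum_congr rfl fun j _ => by ring

theorem delannoy_add_delannoy_lt_of_lt {k m : ℕ} (h : k < m) :
    delannoy (k + 1) (m + 1) + delannoy k (m + 1) < delannoy (k + 2) m + delannoy (k + 1) m := by
  rw [delannoy_add_delannoy_eq_sum (N := k + 3) (by omega),
    delannoy_add_delannoy_eq_sum (k := k + 1) (N := k + 3) (by omega)]
  refine sum_lt_sum (fun j _ => Nat.mul_le_mul_left _ (choose_add_choose_mul_succ_choose_le h j))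
    ⟨1, by simp, Nat.mul_lt_mul_of_pos_left ?_ (by positivity)⟩
  simp only [Nat.choose_one_right]
  nlinarith

theorem delannoy_add_delannoy_lt_of_le {k m : ℕ} (h : m ≤ k) :
    delannoy (k + 2) m + delannoy (k + 1) m < delannoy (k + 1) (m + 1) + delannoy k (m + 1) := by
  rw [delannoy_add_delannoy_eq_sum (k := k + 1) (N := k + 3) (by omega),
    delannoy_add_delannoy_eq_sum (k := k) (N := k + 3) (by omega)]
  refine sum_lt_sum (fun j _ => Nat.mul_le_mul_left _ (choose_add_choose_mul_choose_le_succ h j))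
    ⟨1, by simp, Nat.mul_lt_mul_of_pos_left ?_ (by positivity)⟩
  simp only [Nat.choose_one_right]
  nlinarith

theorem delannoy_pos (p q : ℕ) : 0 < delannoy p q := by
  rw [delannoy, sum_range_succ']
  simp

theorem T_two_lt_succ {n k : ℕ} (h : 2 * k + 1 ≤ n) : T 2 n k < T 2 n (k + 1) := by
  cases k with
  | zero =>
    obtain ⟨q, rfl⟩ : ∃ q, n = q + 0 + 1 := ⟨n - 1, by omega⟩
    rw [T_two_zero, T_two_succ_eq_delannoy 0 q, delannoy_zero_left]
    exact Nat.lt_add_of_pos_left (delannoy_pos 1 q)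
  | succ k =>
    obtain ⟨m, rfl⟩ : ∃ m, n = m + (k + 1) + 1 := ⟨n - k - 2, by omega⟩
    rw [T_two_succ_eq_delannoy (k + 1) m, show m + (k + 1) + 1 = m + 1 + k + 1 by ring,
      T_two_succ_eq_delannoy k (m + 1)]
    exact delannoy_add_delannoy_lt_of_lt (by omega)

theorem T_two_succ_lt {n k : ℕ} (h₁ : n ≤ 2 * k) (h₂ : k < n) :
    T 2 n (k + 1) < T 2 n k := by
  obtain ⟨k, rfl⟩ : ∃ k', k = k' + 1 := ⟨k - 1, by omega⟩
  obtain ⟨m, rfl⟩ : ∃ m, n = m + (k + 1) + 1 := ⟨n - k - 2, by omega⟩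
  rw [T_two_succ_eq_delannoy (k + 1) m, show m + (k + 1) + 1 = m + 1 + k + 1 by ring,
    T_two_succ_eq_delannoy k (m + 1)]
  exact delannoy_add_delannoy_lt_of_le (by omega)

theorem T2_unimodal (n : ℕ) :
    (∀ k : ℕ, k < (n + 1) / 2 → T 2 n k < T 2 n (k + 1)) ∧
    (∀ k : ℕ, (n + 1) / 2 ≤ k → k < n → T 2 n (k + 1) < T 2 n k) ∧
    (∀ k : ℕ, k ≤ n → T 2 n k ≤ T 2 n ((n + 1) / 2)) := by
  refine ⟨fun k hk => T_two_lt_succ (by omega), fun k hk hkn => T_two_succ_lt (by omega) hkn,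
    fun k hk => ?_⟩
  rcases le_total k ((n + 1) / 2) with h | h
  · refine monotoneOn_of_le_add_one (f := T 2 n) Set.ordConnected_Iic
      (fun a _ _ ha => (T_two_lt_succ ?_).le) h Set.self_mem_Iic h
    rw [Set.mem_Iic] at ha
    omega
  · refine antitoneOn_of_add_one_le (f := T 2 n) Set.ordConnected_Icc
      (fun a _ ha ha' => (T_two_succ_lt ?_ ?_).le) ⟨le_rfl, by omega⟩ ⟨h, hk⟩ h
    · rw [Set.mem_Icc] at ha
      omega
    · rw [Set.mem_Icc] at ha'
      omega
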